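/- arXiv:2510.20240 — 10 statements merged into one kernel-verified Lean document; each statement's English description precedes it below -/
import Mathlib

section
/- Let f : X → X be a continuous map on a metric space (X,d), let r > 0, and let x, y ∈ X be such that d(f^j(x), f^j(y)) ≤ r for all j ∈ ℕ. If (x,y) is a mean Li–Yorke ε-pair for f and d for some ε > 0, then (x,y) is a distributional ε/(r+1)-pair of type 2 for f and d. -/
open Filter

/-- Lower density of a set of positive integers. -/
noncomputable def lowerDensity (A : Set ℕ) : ℝ :=
  liminf (fun n : ℕ => (Nat.card ↥(A ∩ Set.Icc 1 n) : ℝ) / (n : ℝ)) atTop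

/-- Upper density of a set of positive integers. -/
noncomputable def upperDensity (A : Set ℕ) : ℝ :=
  limsup (fun n : ℕ => (Nat.card ↥(A ∩ Set.Icc 1 n) : ℝ) / (n : ℝ)) atTop

/-- The lower distributional function Φ_{(x,y)}(δ) generated by `f` for the pair `(x,y)`. -/
noncomputable def lowerDistFn {X : Type*} [MetricSpace X] (f : X → X) (x y : X) (δ : ℝ) : ℝ :=
  lowerDensity {j : ℕ | dist (f^[j] x) (f^[j] y) < δ}

/-- The upper distributional function Φ*_{(x,y)}(δ) generated by `f` for the pair `(x,y)`. -/
noncomputable def upperDistFn {X : Type*} [MetricSpace X] (f : X → X) (x y : X) (δ : ℝ) : ℝ :=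
  upperDensity {j : ℕ | dist (f^[j] x) (f^[j] y) < δ}

/-- `(x,y)` is a mean Li–Yorke ε-pair for `f` and the metric of `X`. -/
def IsMLYPair {X : Type*} [MetricSpace X] (f : X → X) (ε : ℝ) (x y : X) : Prop :=
  ε ≤ limsup (fun n : ℕ => (∑ j ∈ Finset.Icc 1 n, dist (f^[j] x) (f^[j] y)) / (n : ℝ)) atTop ∧
    liminf (fun n : ℕ => (∑ j ∈ Finset.Icc 1 n, dist (f^[j] x) (f^[j] y)) / (n : ℝ)) atTop = 0

/-! Write `a j = d(f^j x, f^j y) ∈ [0, r]`, `S n` for its Cesàro averages and `c n` for the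
proportion of indices `j ≤ n` with `a j < δ`. Splitting the sum according to `a j < δ` gives the
Markov-type bounds `δ (1 - c n) ≤ S n ≤ δ + r (1 - c n)`. For `δ = ε / (r + 1)`, the upper bound
shows that `liminf c > 1 - δ` would force `limsup S < δ + r δ = ε`; the lower bound shows that
`limsup c < 1` would keep `S` eventually above a positive constant, against `liminf S = 0`. -/

open Finset

noncomputable def partialDensity (A : Set ℕ) (n : ℕ) : ℝ :=
  (Nat.card ↥(A ∩ Set.Icc 1 n) : ℝ) / n

noncomputable def cesaroAverage (a : ℕ → ℝ) (n : ℕ) : ℝ :=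
  (∑ j ∈ Icc 1 n, a j) / n

lemma natCard_inter_Icc_eq_sum_indicator (A : Set ℕ) (n : ℕ) :
    (Nat.card ↥(A ∩ Set.Icc 1 n) : ℝ) = ∑ j ∈ Icc 1 n, A.indicator 1 j := by
  classical
  have hA : A ∩ Set.Icc 1 n = ↑((Icc 1 n).filter (· ∈ A)) := by
    ext j
    simp only [Set.mem_inter_iff, Set.mem_Icc, coe_filter, mem_Icc, Set.mem_ofPred_eq]
    tauto
  rw [hA, Nat.card_coe_set_eq, Set.ncard_coe_finset, card_filter]
  push_cast
  simp [Set.indicator_apply]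

lemma partialDensity_nonneg (A : Set ℕ) (n : ℕ) : 0 ≤ partialDensity A n := by
  unfold partialDensity; positivity

lemma partialDensity_le_one (A : Set ℕ) (n : ℕ) : partialDensity A n ≤ 1 := by
  rcases n.eq_zero_or_pos with rfl | hn
  · simp [partialDensity]
  · rw [partialDensity, div_le_one (by exact_mod_cast hn)]
    exact_mod_cast (Nat.card_mono (Set.finite_Icc 1 n) Set.inter_subset_right).trans
      (by simp)

section

variable {a : ℕ → ℝ} {r δ : ℝ}

lemma cesaroAverage_nonneg (ha : ∀ j, 0 ≤ a j) (n : ℕ) : 0 ≤ cesaroAverage a n :=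
  div_nonneg (sum_nonneg fun j _ => ha j) n.cast_nonneg

lemma cesaroAverage_le (hr : 0 ≤ r) (har : ∀ j, 1 ≤ j → a j ≤ r) (n : ℕ) :
    cesaroAverage a n ≤ r := by
  rcases n.eq_zero_or_pos with rfl | hn
  · simpa [cesaroAverage] using hr
  · rw [cesaroAverage, div_le_iff₀ (by exact_mod_cast hn)]
    calc ∑ j ∈ Icc 1 n, a j ≤ ∑ j ∈ Icc 1 n, r :=
          sum_le_sum fun j hj => har j (mem_Icc.mp hj).1
      _ = r * n := by simp [mul_comm]

lemma sum_one_sub_indicator_Icc (A : Set ℕ) (n : ℕ) :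
    ∑ j ∈ Icc 1 n, (1 - A.indicator 1 j) = n * (1 - partialDensity A n) := by
  rcases n.eq_zero_or_pos with rfl | hn
  · simp
  · rw [sum_sub_distrib, ← natCard_inter_Icc_eq_sum_indicator, partialDensity]
    field_simp
    simp

lemma mul_one_sub_partialDensity_le_cesaroAverage (ha : ∀ j, 0 ≤ a j) {n : ℕ} (hn : 0 < n) :
    δ * (1 - partialDensity {j | a j < δ} n) ≤ cesaroAverage a n := by
  rw [cesaroAverage, le_div_iff₀ (by exact_mod_cast hn)]
  calc δ * (1 - partialDensity {j | a j < δ} n) * n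
      = ∑ j ∈ Icc 1 n, δ * (1 - {j | a j < δ}.indicator 1 j) := by
        rw [← mul_sum, sum_one_sub_indicator_Icc]; ring
    _ ≤ ∑ j ∈ Icc 1 n, a j := sum_le_sum fun j _ => by
        by_cases hj : a j < δ
        · simp [hj, ha j]
        · simp [hj, not_lt.mp hj]

lemma cesaroAverage_le_add_mul_one_sub_partialDensity (hδ : 0 ≤ δ)
    (har : ∀ j, 1 ≤ j → a j ≤ r) {n : ℕ} (hn : 0 < n) :
    cesaroAverage a n ≤ δ + r * (1 - partialDensity {j | a j < δ} n) := by
  rw [cesaroAverage, div_le_iff₀ (by exact_mod_cast hn)]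
  calc ∑ j ∈ Icc 1 n, a j ≤ ∑ j ∈ Icc 1 n, (δ + r * (1 - {j | a j < δ}.indicator 1 j)) :=
        sum_le_sum fun j hj => by
          by_cases hj' : a j < δ
          · simp [hj', hj'.le]
          · simpa [hj'] using add_le_add hδ (har j (mem_Icc.mp hj).1)
    _ = (δ + r * (1 - partialDensity {j | a j < δ} n)) * n := by
        rw [sum_add_distrib, ← mul_sum, sum_one_sub_indicator_Icc]; simp; ring

lemma lowerDensity_le_of_le_limsup_cesaroAverage (ha : ∀ j, 0 ≤ a j) (hr : 0 < r)
    (har : ∀ j, 1 ≤ j → a j ≤ r) (hδ : 0 ≤ δ)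
    (hlim : δ * (r + 1) ≤ limsup (cesaroAverage a) atTop) :
    lowerDensity {j | a j < δ} ≤ 1 - δ := by
  by_contra! h
  obtain ⟨t, hδt, ht⟩ := exists_between h
  have hev : ∀ᶠ n in atTop, t < partialDensity {j | a j < δ} n :=
    eventually_lt_of_lt_liminf ht (isBoundedUnder_of ⟨0, partialDensity_nonneg _⟩)
  have hsup : limsup (cesaroAverage a) atTop ≤ δ + r * (1 - t) := by
    refine limsup_le_of_le (isCoboundedUnder_le_of_le atTop (cesaroAverage_nonneg ha)) ?_
    filter_upwards [hev, eventually_gt_atTop 0] with n htn hn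
    calc _ ≤ _ := cesaroAverage_le_add_mul_one_sub_partialDensity hδ har hn
      _ ≤ _ := by gcongr
  nlinarith

lemma upperDensity_eq_one_of_liminf_cesaroAverage_eq_zero (ha : ∀ j, 0 ≤ a j)
    (har : ∀ j, 1 ≤ j → a j ≤ r) (hlim : liminf (cesaroAverage a) atTop = 0) (hδ : 0 < δ) :
    upperDensity {j | a j < δ} = 1 := by
  have hr : 0 ≤ r := (ha 1).trans (har 1 le_rfl)
  refine le_antisymm (limsup_le_of_le (isCoboundedUnder_le_of_le atTop (partialDensity_nonneg _))
    (Eventually.of_forall (partialDensity_le_one _))) ?_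
  by_contra! h
  obtain ⟨t, hδt, ht⟩ := exists_between h
  have hev : ∀ᶠ n in atTop, partialDensity {j | a j < δ} n < t :=
    eventually_lt_of_limsup_lt hδt (isBoundedUnder_of ⟨1, partialDensity_le_one _⟩)
  have hinf : δ * (1 - t) ≤ liminf (cesaroAverage a) atTop := by
    refine le_liminf_of_le (isCoboundedUnder_ge_of_le atTop (cesaroAverage_le hr har)) ?_
    filter_upwards [hev, eventually_gt_atTop 0] with n htn hn
    calc _ ≤ _ := by gcongr
      _ ≤ _ := mul_one_sub_partialDensity_le_cesaroAverage ha hn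
  rw [hlim] at hinf
  nlinarith

end

theorem mlyPair_isD2Pair_general {X : Type*} [MetricSpace X] (f : X → X)
    (r : ℝ) (hr : 0 < r) (x y : X)
    (hbd : ∀ j : ℕ, 1 ≤ j → dist (f^[j] x) (f^[j] y) ≤ r)
    (ε : ℝ) (hε : 0 < ε) (hMLY : IsMLYPair f ε x y) :
    lowerDistFn f x y (ε / (r + 1)) ≤ 1 - ε / (r + 1) ∧
      ∀ δ : ℝ, 0 < δ → upperDistFn f x y δ = 1 := by
  obtain ⟨hsup, hinf⟩ := hMLY
  have hdist : ∀ j, 0 ≤ dist (f^[j] x) (f^[j] y) := fun j => dist_nonneg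
  refine ⟨lowerDensity_le_of_le_limsup_cesaroAverage hdist hr hbd (by positivity) ?_,
    fun δ hδ => upperDensity_eq_one_of_liminf_cesaroAverage_eq_zero hdist hbd hinf hδ⟩
  rwa [div_mul_cancel₀ ε (by positivity : r + 1 ≠ 0)]

/-- If `d(f^j(x), f^j(y)) ≤ r` for all `j ∈ ℕ` and `(x,y)` is a mean Li–Yorke ε-pair, then
`(x,y)` is a distributional `ε/(r+1)`-pair of type 2. -/
theorem mlyPair_isD2Pair {X : Type*} [MetricSpace X] (f : X → X) (hf : Continuous f)
    (r : ℝ) (hr : 0 < r) (x y : X)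
    (hbd : ∀ j : ℕ, 1 ≤ j → dist (f^[j] x) (f^[j] y) ≤ r)
    (ε : ℝ) (hε : 0 < ε) (hMLY : IsMLYPair f ε x y) :
    lowerDistFn f x y (ε / (r + 1)) ≤ 1 - ε / (r + 1) ∧
      ∀ δ : ℝ, 0 < δ → upperDistFn f x y δ = 1 :=
  mlyPair_isD2Pair_general f r hr x y hbd ε hε hMLY
end

section
/- Let f : X → X be a continuous map on a metric space (X,d), let r > 0, and let x, y ∈ X be such that d(f^j(x), f^j(y)) ≤ r for all j ∈ ℕ. If (x,y) is a distributional ε-pair of type 2 for f and d for some 0 < ε ≤ 1, then (x,y) is a mean Li–Yorke ε²-pair for f and d. -/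
/-!
Write `aⱼ = d(fʲx, fʲy)` and split the Cesàro mean of `a` at a threshold. The terms with
`aⱼ ≥ ε` contribute at least `ε` times their proportion among `1, …, n`; since `Φ(ε) ≤ 1 - ε`,
this proportion is at least `ε - o(1)` along a subsequence, so the upper mean is at least `ε²`.
For `δ > 0`, the terms with `aⱼ < δ` contribute at most `δ` and the others at most `r` times
their proportion; since `Φ*(δ) = 1`, that proportion tends to `0` along a subsequence, so the
lower mean is at most `δ`.
-/

open Filter

open Finset

-- `lowerDensity`, `upperDensity` and the averages in `IsMLYPair` are, definitionally, the
-- liminf and limsup of `densityRatio` and `cesaroMean`.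
noncomputable def densityRatio (A : Set ℕ) (n : ℕ) : ℝ :=
  (Nat.card ↥(A ∩ Set.Icc 1 n) : ℝ) / n

noncomputable def cesaroMean (a : ℕ → ℝ) (n : ℕ) : ℝ :=
  (∑ j ∈ Icc 1 n, a j) / n

lemma natCard_inter_Icc_eq_card_filter (A : Set ℕ) [DecidablePred (· ∈ A)] (n : ℕ) :
    Nat.card ↥(A ∩ Set.Icc 1 n) = #{j ∈ Icc 1 n | j ∈ A} := by
  have : A ∩ Set.Icc 1 n = ↑({j ∈ Icc 1 n | j ∈ A}) := by ext j; simp; tauto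
  rw [this, Nat.card_coe_set_eq, Set.ncard_coe_finset]

lemma densityRatio_nonneg (A : Set ℕ) (n : ℕ) : 0 ≤ densityRatio A n := by
  unfold densityRatio; positivity

lemma densityRatio_le_one (A : Set ℕ) (n : ℕ) : densityRatio A n ≤ 1 := by
  classical
  refine div_le_one_of_le₀ ?_ n.cast_nonneg
  rw [natCard_inter_Icc_eq_card_filter]
  exact_mod_cast (card_filter_le _ _).trans (Nat.card_Icc 1 n).le

lemma densityRatio_setOf_eq (p : ℕ → Prop) [DecidablePred p] (n : ℕ) :
    densityRatio {j | p j} n = #{j ∈ Icc 1 n | p j} / n := by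
  rw [densityRatio, natCard_inter_Icc_eq_card_filter]
  rfl

section FinsetSum

variable {ι : Type*} (s : Finset ι) (a : ι → ℝ)

lemma cast_card_sub_card_filter (p : ι → Prop) [DecidablePred p] :
    (#s : ℝ) - #{j ∈ s | p j} = #{j ∈ s | ¬ p j} := by
  rw [← card_filter_add_card_filter_not p]; push_cast; ring

lemma mul_card_sub_card_filter_lt_le_sum (ha : ∀ j ∈ s, 0 ≤ a j) (ε : ℝ) :
    ε * (#s - #{j ∈ s | a j < ε}) ≤ ∑ j ∈ s, a j :=
  calc ε * (#s - #{j ∈ s | a j < ε}) = #{j ∈ s | ¬ a j < ε} • ε := by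
        rw [cast_card_sub_card_filter, nsmul_eq_mul, mul_comm]
    _ ≤ ∑ j ∈ s with ¬ a j < ε, a j :=
        card_nsmul_le_sum _ _ _ fun j hj => not_lt.mp (mem_filter.mp hj).2
    _ ≤ ∑ j ∈ s, a j :=
        sum_le_sum_of_subset_of_nonneg (filter_subset _ _) fun j hj _ => ha j hj

lemma sum_le_mul_card_filter_lt_add {r : ℝ} (har : ∀ j ∈ s, a j ≤ r) (δ : ℝ) :
    ∑ j ∈ s, a j ≤ δ * #{j ∈ s | a j < δ} + r * (#s - #{j ∈ s | a j < δ}) := by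
  rw [← sum_filter_add_sum_filter_not s (fun j => a j < δ), cast_card_sub_card_filter,
    mul_comm δ, mul_comm r, ← nsmul_eq_mul, ← nsmul_eq_mul]
  gcongr
  · exact sum_le_card_nsmul _ _ _ fun j hj => (mem_filter.mp hj).2.le
  · exact sum_le_card_nsmul _ _ _ fun j hj => har j (mem_filter.mp hj).1

end FinsetSum

section CesaroMean

variable {a : ℕ → ℝ}

lemma mul_one_sub_densityRatio_le_cesaroMean (ha : ∀ j, 0 ≤ a j) (ε : ℝ) {n : ℕ} (hn : n ≠ 0) :
    ε * (1 - densityRatio {j | a j < ε} n) ≤ cesaroMean a n := by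
  have hn' : (n : ℝ) ≠ 0 := Nat.cast_ne_zero.mpr hn
  rw [densityRatio_setOf_eq, one_sub_div hn', mul_div_assoc', cesaroMean]
  gcongr
  simpa using mul_card_sub_card_filter_lt_le_sum (Icc 1 n) a (fun j _ => ha j) ε

lemma cesaroMean_le_add_mul_one_sub_densityRatio {r : ℝ} (har : ∀ j, 1 ≤ j → a j ≤ r) {δ : ℝ}
    (hδ : 0 ≤ δ) {n : ℕ} (hn : n ≠ 0) :
    cesaroMean a n ≤ δ + r * (1 - densityRatio {j | a j < δ} n) := by
  have hn' : (n : ℝ) ≠ 0 := Nat.cast_ne_zero.mpr hn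
  have hcard : (#{j ∈ Icc 1 n | a j < δ} : ℝ) ≤ n := by
    exact_mod_cast (card_filter_le _ _).trans (Nat.card_Icc 1 n).le
  rw [densityRatio_setOf_eq, one_sub_div hn', mul_div_assoc', cesaroMean,
    div_le_iff₀ (by positivity), add_mul, div_mul_cancel₀ _ hn']
  calc ∑ j ∈ Icc 1 n, a j
      ≤ δ * #{j ∈ Icc 1 n | a j < δ} + r * (n - #{j ∈ Icc 1 n | a j < δ}) := by
        simpa using
          sum_le_mul_card_filter_lt_add (Icc 1 n) a (fun j hj => har j (mem_Icc.mp hj).1) δ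
    _ ≤ δ * n + r * (n - #{j ∈ Icc 1 n | a j < δ}) := by gcongr

lemma cesaroMean_nonneg (ha : ∀ j, 0 ≤ a j) (n : ℕ) : 0 ≤ cesaroMean a n :=
  div_nonneg (sum_nonneg fun j _ => ha j) n.cast_nonneg

lemma cesaroMean_le {r : ℝ} (har : ∀ j, 1 ≤ j → a j ≤ r) {n : ℕ} (hn : n ≠ 0) :
    cesaroMean a n ≤ r := by
  rw [cesaroMean, div_le_iff₀ (by positivity)]
  calc ∑ j ∈ Icc 1 n, a j ≤ #(Icc 1 n) • r :=
        sum_le_card_nsmul _ _ _ fun j hj => har j (mem_Icc.mp hj).1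
    _ = r * n := by simp [mul_comm]

lemma isBoundedUnder_le_cesaroMean {r : ℝ} (har : ∀ j, 1 ≤ j → a j ≤ r) :
    IsBoundedUnder (· ≤ ·) atTop (cesaroMean a) :=
  isBoundedUnder_of_eventually_le <|
    (eventually_ne_atTop 0).mono fun _ hn => cesaroMean_le har hn

lemma mul_one_sub_liminf_densityRatio_le_limsup_cesaroMean (ha : ∀ j, 0 ≤ a j) {r : ℝ}
    (har : ∀ j, 1 ≤ j → a j ≤ r) {ε : ℝ} (hε : 0 ≤ ε) :
    ε * (1 - liminf (densityRatio {j | a j < ε}) atTop) ≤ limsup (cesaroMean a) atTop := by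
  have hg : Antitone fun t : ℝ => ε * (1 - t) := fun s t hst => by dsimp only; gcongr
  rw [hg.map_liminf_of_continuousAt _ (by fun_prop)
    (isCoboundedUnder_ge_of_le _ (densityRatio_le_one _))
    (isBoundedUnder_of_eventually_ge (.of_forall (densityRatio_nonneg _)))]
  refine limsup_le_limsup ?_ ?_ (isBoundedUnder_le_cesaroMean har)
  · filter_upwards [eventually_ne_atTop 0] with n hn
    exact mul_one_sub_densityRatio_le_cesaroMean ha ε hn
  · refine isCoboundedUnder_le_of_le _ (x := 0) fun n => ?_
    have := densityRatio_le_one {j | a j < ε} n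
    dsimp only [Function.comp_apply]
    nlinarith

lemma liminf_cesaroMean_le (ha : ∀ j, 0 ≤ a j) {r : ℝ} (har : ∀ j, 1 ≤ j → a j ≤ r) (hr : 0 ≤ r)
    {δ : ℝ} (hδ : 0 ≤ δ) :
    liminf (cesaroMean a) atTop ≤ δ + r * (1 - limsup (densityRatio {j | a j < δ}) atTop) := by
  have hg : Antitone fun t : ℝ => δ + r * (1 - t) := fun s t hst => by dsimp only; gcongr
  rw [hg.map_limsup_of_continuousAt _ (by fun_prop)
    (isBoundedUnder_of_eventually_le (.of_forall (densityRatio_le_one _)))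
    (isCoboundedUnder_le_of_le _ (densityRatio_nonneg _))]
  refine liminf_le_liminf ?_
    (isBoundedUnder_of_eventually_ge (.of_forall (cesaroMean_nonneg ha))) ?_
  · filter_upwards [eventually_ne_atTop 0] with n hn
    exact cesaroMean_le_add_mul_one_sub_densityRatio har hδ hn
  · refine isCoboundedUnder_ge_of_le _ (x := δ + r) fun n => ?_
    have := densityRatio_nonneg {j | a j < δ} n
    dsimp only [Function.comp_apply]
    nlinarith

lemma liminf_cesaroMean_nonneg (ha : ∀ j, 0 ≤ a j) {r : ℝ} (har : ∀ j, 1 ≤ j → a j ≤ r) :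
    0 ≤ liminf (cesaroMean a) atTop :=
  le_liminf_of_le (isBoundedUnder_le_cesaroMean har).isCoboundedUnder_ge
    (.of_forall (cesaroMean_nonneg ha))

end CesaroMean

theorem d2Pair_isMLYPair_general {X : Type*} [MetricSpace X] (f : X → X)
    (r : ℝ) (hr : 0 < r) (x y : X)
    (hbd : ∀ j : ℕ, 1 ≤ j → dist (f^[j] x) (f^[j] y) ≤ r)
    (ε : ℝ) (hε0 : 0 < ε)
    (hD2 : lowerDistFn f x y ε ≤ 1 - ε ∧ ∀ δ : ℝ, 0 < δ → upperDistFn f x y δ = 1) :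
    IsMLYPair f (ε ^ 2) x y := by
  obtain ⟨hlow, hupp⟩ := hD2
  have hdist : ∀ j, 0 ≤ dist (f^[j] x) (f^[j] y) := fun _ => dist_nonneg
  refine ⟨?_, le_antisymm (le_of_forall_pos_le_add fun δ hδ => ?_)
    (liminf_cesaroMean_nonneg hdist hbd)⟩
  · calc ε ^ 2 ≤ ε * (1 - lowerDistFn f x y ε) := by nlinarith
      _ ≤ _ := mul_one_sub_liminf_densityRatio_le_limsup_cesaroMean hdist hbd hε0.le
  · calc _ ≤ δ + r * (1 - upperDistFn f x y δ) := liminf_cesaroMean_le hdist hbd hr.le hδ.le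
      _ = 0 + δ := by rw [hupp δ hδ]; ring

/-- If `d(f^j(x), f^j(y)) ≤ r` for all `j ∈ ℕ` and `(x,y)` is a distributional ε-pair of
type 2 with `0 < ε ≤ 1`, then `(x,y)` is a mean Li–Yorke ε²-pair. -/
theorem d2Pair_isMLYPair {X : Type*} [MetricSpace X] (f : X → X) (hf : Continuous f)
    (r : ℝ) (hr : 0 < r) (x y : X)
    (hbd : ∀ j : ℕ, 1 ≤ j → dist (f^[j] x) (f^[j] y) ≤ r)
    (ε : ℝ) (hε0 : 0 < ε) (hε1 : ε ≤ 1)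
    (hD2 : lowerDistFn f x y ε ≤ 1 - ε ∧ ∀ δ : ℝ, 0 < δ → upperDistFn f x y δ = 1) :
    IsMLYPair f (ε ^ 2) x y :=
  d2Pair_isMLYPair_general f r hr x y hbd ε hε0 hD2
end

section
/- Let (X,d) be a metric space, let K ⊆ X be nonempty compact, and let u be a normal fuzzy set on X. If δ := d_S(χ_K, u) < 1, then the Hausdorff distance satisfies d_H(K, u_α) ≤ δ for every level α ∈ [0, 1−δ] (where u_α denotes the α-level for α > 0 and u₀ for α = 0). -/
/-! For `x ∈ K`, the top point `(x, 1)` of `K × [0,1]` has a nearest point `(y, β)` in the compact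
set `send u`, at distance at most `δ`; hence `d(x, y) ≤ δ` and `β ≥ 1 - δ ≥ α`, so `y ∈ u_α`.
Conversely, for `y ∈ u_α` the point `(y, α)` lies in `send u`, so some `(x, γ) ∈ K × [0,1]`
is within `δ` of it, and `d(y, x) ≤ δ`. -/

open Metric Set

/-- A normal fuzzy set on a metric space: an upper semicontinuous function `u : X → [0,1]`
whose support-closure `u₀` is compact and whose core `u₁` is nonempty. -/
structure NormalFuzzySet (X : Type*) [MetricSpace X] where
  toFun : X → ℝ
  mem_Icc' : ∀ x, toFun x ∈ Set.Icc (0 : ℝ) 1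
  upperSemicontinuous' : UpperSemicontinuous toFun
  isCompact_closure_support' : IsCompact (closure {x | 0 < toFun x})
  core_nonempty' : {x | 1 ≤ toFun x}.Nonempty

namespace NormalFuzzySet

variable {X : Type*} [MetricSpace X]

/-- The α-level of a normal fuzzy set: `u₀` (the closure of the support) for `α ≤ 0`,
and `{x | u x ≥ α}` for `α > 0`. -/
noncomputable def level (u : NormalFuzzySet X) (α : ℝ) : Set X :=
  if α ≤ 0 then closure {x | 0 < u.toFun x} else {x | α ≤ u.toFun x}

/-- The sendograph of a normal fuzzy set, a subset of `X × ℝ`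
(whose product metric is exactly `d̄((x,α),(y,β)) = max (d x y) |α - β|`). -/
def sendograph (u : NormalFuzzySet X) : Set (X × ℝ) :=
  {p : X × ℝ | p.1 ∈ closure {x | 0 < u.toFun x} ∧ 0 ≤ p.2 ∧ p.2 ≤ u.toFun p.1}

/-- The endograph of a normal fuzzy set. -/
def endograph (u : NormalFuzzySet X) : Set (X × ℝ) :=
  {p : X × ℝ | 0 ≤ p.2 ∧ p.2 ≤ u.toFun p.1}

end NormalFuzzySet

namespace Metric

variable {α : Type*} [PseudoMetricSpace α] {s t : Set α}

theorem exists_dist_le_hausdorffDist_of_mem {x : α} (hx : x ∈ s) (ht : IsCompact t)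
    (hne : t.Nonempty) (fin : hausdorffEDist s t ≠ ⊤) :
    ∃ y ∈ t, dist x y ≤ hausdorffDist s t := by
  obtain ⟨y, hy, hdist⟩ := ht.exists_infDist_eq_dist hne x
  exact ⟨y, hy, hdist ▸ infDist_le_hausdorffDist_of_mem hx fin⟩

theorem exists_dist_le_hausdorffDist_of_mem' {y : α} (hy : y ∈ t) (hs : IsCompact s)
    (hne : s.Nonempty) (fin : hausdorffEDist s t ≠ ⊤) :
    ∃ x ∈ s, dist y x ≤ hausdorffDist s t := by
  rw [hausdorffDist_comm]
  exact exists_dist_le_hausdorffDist_of_mem hy hs hne (by rwa [hausdorffEDist_comm])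

end Metric

namespace NormalFuzzySet

variable {X : Type*} [MetricSpace X] (u : NormalFuzzySet X)

theorem isClosed_sendograph : IsClosed u.sendograph := by
  have hypograph : IsClosed {p : X × ℝ | p.1 ∈ closure {x | 0 < u.toFun x} ∧ p.2 ≤ u.toFun p.1} :=
    (upperSemicontinuousOn_iff_isClosed_hypograph isClosed_closure).1
      (u.upperSemicontinuous'.upperSemicontinuousOn _)
  convert hypograph.inter (isClosed_le continuous_const continuous_snd) using 1
  ext p
  simp only [sendograph, mem_ofPred_eq, mem_inter_iff]
  tauto

theorem isCompact_sendograph : IsCompact u.sendograph :=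
  (u.isCompact_closure_support'.prod isCompact_Icc).of_isClosed_subset u.isClosed_sendograph
    fun p ⟨hp, h0, hle⟩ => ⟨hp, h0, hle.trans (u.mem_Icc' p.1).2⟩

theorem sendograph_nonempty : u.sendograph.Nonempty := by
  obtain ⟨x, hx⟩ := u.core_nonempty'
  exact ⟨(x, 0), subset_closure (show 0 < u.toFun x from one_pos.trans_le hx), le_rfl,
    (u.mem_Icc' x).1⟩

variable {u}

theorem mk_mem_sendograph_of_mem_level {x : X} {α : ℝ} (hα : 0 ≤ α) (hx : x ∈ u.level α) :
    (x, α) ∈ u.sendograph := by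
  unfold level at hx
  split_ifs at hx with hα0
  · exact ⟨hx, hα, (le_antisymm hα0 hα).trans_le (u.mem_Icc' x).1⟩
  · exact ⟨subset_closure ((not_le.1 hα0).trans_le hx), hα, hx⟩

theorem mem_level_of_mk_mem_sendograph {x : X} {α β : ℝ} (hx : (x, β) ∈ u.sendograph)
    (hαβ : α ≤ β) : x ∈ u.level α := by
  unfold level
  split_ifs
  · exact hx.1
  · exact hαβ.trans hx.2.2

end NormalFuzzySet

open NormalFuzzySet in
/-- If `δ := d_S(χ_K, u) < 1`, then `d_H(K, u_α) ≤ δ` for every `α ∈ [0, 1 - δ]`.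
Here `d_S(χ_K, u)` is the Hausdorff distance between `send(χ_K) = K × [0,1]` and
`send(u)` in `X × ℝ`. -/
theorem hausdorffDist_level_le_of_sendographDist_lt_one {X : Type*} [MetricSpace X]
    (K : Set X) (hK : IsCompact K) (hKne : K.Nonempty) (u : NormalFuzzySet X) (δ : ℝ)
    (hδ : δ = hausdorffDist (K ×ˢ Icc (0 : ℝ) 1) u.sendograph) (hδ1 : δ < 1) :
    ∀ α ∈ Icc (0 : ℝ) (1 - δ), hausdorffDist K (u.level α) ≤ δ := by
  rintro α ⟨hα0, hα1⟩
  have hKI : IsCompact (K ×ˢ Icc (0 : ℝ) 1) := hK.prod isCompact_Icc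
  have hKIne : (K ×ˢ Icc (0 : ℝ) 1).Nonempty := hKne.prod (nonempty_Icc.2 zero_le_one)
  have fin : hausdorffEDist (K ×ˢ Icc (0 : ℝ) 1) u.sendograph ≠ ⊤ :=
    hausdorffEDist_ne_top_of_nonempty_of_bounded hKIne u.sendograph_nonempty hKI.isBounded
      u.isCompact_sendograph.isBounded
  subst hδ
  refine hausdorffDist_le_of_mem_dist hausdorffDist_nonneg (fun x hx => ?_) (fun y hy => ?_)
  · obtain ⟨⟨y, β⟩, hy, hdist⟩ := exists_dist_le_hausdorffDist_of_mem
      (mk_mem_prod hx (right_mem_Icc.2 zero_le_one)) u.isCompact_sendograph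
      u.sendograph_nonempty fin
    rw [Prod.dist_eq, max_le_iff, Real.dist_eq, abs_le] at hdist
    exact ⟨y, mem_level_of_mk_mem_sendograph hy (by linarith [hdist.2.2]), hdist.1⟩
  · obtain ⟨⟨x, γ⟩, hx, hdist⟩ := exists_dist_le_hausdorffDist_of_mem'
      (mk_mem_sendograph_of_mem_level hα0 hy) hKI hKIne fin
    exact ⟨x, hx.1, (le_max_left _ _).trans hdist⟩
end

section
/- Let (X,d) be a metric space, let K ⊆ X be nonempty compact, let u be a normal fuzzy set on X, and let ε > 0. If ε < min{d_S(χ_K, u), 1}, then there exists a level α ∈ [0, 1−ε] such that the Hausdorff distance satisfies d_H(K, u_α) > ε (where u_α denotes the α-level for α > 0 and u₀ for α = 0). -/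
open Metric Set

/-! If every level `u_α` with `α ∈ [0, 1 - ε]` were within Hausdorff distance `ε` of `K`,
the sendographs would be `ε`-close: a point `(x, t)` of `K × [0,1]` is matched by
`(y, min t (u y))` with `y ∈ u_α`, `α = min t (1 - ε)`, and a point `(y, s)` of `send(u)` by
`(x, min s (1 - ε))` with `x ∈ K` close to `y ∈ u_{min s (1 - ε)}`. Truncating heights at
`1 - ε` costs at most `ε` in the second coordinate. -/

theorem Metric.exists_dist_le_of_hausdorffDist_le {α : Type*} [PseudoMetricSpace α]
    {s t : Set α} {x : α} {r : ℝ} (hs : Bornology.IsBounded s) (ht : IsCompact t)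
    (htne : t.Nonempty) (hx : x ∈ s) (h : hausdorffDist s t ≤ r) :
    ∃ y ∈ t, dist x y ≤ r := by
  have hfin : hausdorffEDist s t ≠ ⊤ :=
    hausdorffEDist_ne_top_of_nonempty_of_bounded ⟨x, hx⟩ htne hs ht.isBounded
  obtain ⟨y, hy, hxy⟩ := ht.exists_infDist_eq_dist htne x
  exact ⟨y, hy, hxy ▸ (infDist_le_hausdorffDist_of_mem hx hfin).trans h⟩

theorem Real.dist_self_min_le {t c ε : ℝ} (hε : 0 ≤ ε) (h : t - ε ≤ c) :
    dist t (min t c) ≤ ε := by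
  rw [Real.dist_eq, abs_le]
  constructor <;> cases min_cases t c <;> linarith

namespace NormalFuzzySet

variable {X : Type*} [MetricSpace X] (u : NormalFuzzySet X)

theorem nonneg (x : X) : 0 ≤ u.toFun x := (u.mem_Icc' x).1

theorem le_one (x : X) : u.toFun x ≤ 1 := (u.mem_Icc' x).2

theorem level_subset_closure_support (α : ℝ) : u.level α ⊆ closure {x | 0 < u.toFun x} := by
  intro x hx
  unfold level at hx
  split_ifs at hx with hα
  · exact hx
  · exact subset_closure ((not_le.mp hα).trans_le hx)

theorem isClosed_level (α : ℝ) : IsClosed (u.level α) := by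
  unfold level
  split_ifs
  · exact isClosed_closure
  · exact u.upperSemicontinuous'.isClosed_preimage α

theorem isCompact_level (α : ℝ) : IsCompact (u.level α) :=
  u.isCompact_closure_support'.of_isClosed_subset (u.isClosed_level α)
    (u.level_subset_closure_support α)

theorem level_nonempty {α : ℝ} (hα : α ≤ 1) : (u.level α).Nonempty := by
  obtain ⟨c, hc⟩ := u.core_nonempty'
  refine ⟨c, ?_⟩
  unfold level
  split_ifs
  · exact subset_closure (show 0 < u.toFun c from one_pos.trans_le hc)
  · exact hα.trans hc

theorem le_of_mem_level {α : ℝ} {x : X} (hα : 0 ≤ α) (hx : x ∈ u.level α) : α ≤ u.toFun x := by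
  unfold level at hx
  split_ifs at hx with h
  · exact (le_antisymm h hα) ▸ u.nonneg x
  · exact hx

theorem mem_level_of_le {α : ℝ} {x : X} (hx : x ∈ closure {x | 0 < u.toFun x})
    (h : α ≤ u.toFun x) : x ∈ u.level α := by
  unfold level
  split_ifs
  · exact hx
  · exact h

theorem hausdorffDist_sendograph_le {K : Set X} (hK : IsCompact K) (hKne : K.Nonempty) {ε : ℝ}
    (hε : 0 ≤ ε) (hε1 : ε ≤ 1)
    (h : ∀ α ∈ Icc (0 : ℝ) (1 - ε), hausdorffDist K (u.level α) ≤ ε) :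
    hausdorffDist (K ×ˢ Icc (0 : ℝ) 1) u.sendograph ≤ ε := by
  apply hausdorffDist_le_of_mem_dist hε
  · rintro ⟨x, t⟩ ⟨hx, ht0, ht1⟩
    set α := min t (1 - ε)
    have hα : α ∈ Icc (0 : ℝ) (1 - ε) := ⟨le_min ht0 (by linarith), min_le_right _ _⟩
    obtain ⟨y, hy, hxy⟩ := exists_dist_le_of_hausdorffDist_le hK.isBounded
      (u.isCompact_level α) (u.level_nonempty (by linarith [hα.2])) hx (h α hα)
    have hαy : α ≤ u.toFun y := u.le_of_mem_level hα.1 hy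
    refine ⟨(y, min t (u.toFun y)), ⟨u.level_subset_closure_support α hy,
      le_min ht0 (u.nonneg y), min_le_right _ _⟩, max_le hxy ?_⟩
    refine Real.dist_self_min_le hε (le_trans ?_ hαy)
    exact le_min (by linarith) (by linarith)
  · rintro ⟨y, s⟩ ⟨hy, hs0, hsy⟩
    set α := min s (1 - ε)
    have hα : α ∈ Icc (0 : ℝ) (1 - ε) := ⟨le_min hs0 (by linarith), min_le_right _ _⟩
    have hyα : y ∈ u.level α := u.mem_level_of_le hy ((min_le_left _ _).trans hsy)
    obtain ⟨x, hx, hyx⟩ := exists_dist_le_of_hausdorffDist_le (u.isCompact_level α).isBounded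
      hK hKne hyα (hausdorffDist_comm.trans_le (h α hα))
    refine ⟨(x, α), ⟨hx, hα.1, by linarith [hα.2]⟩, max_le hyx ?_⟩
    exact Real.dist_self_min_le hε (by linarith [u.le_one y])

end NormalFuzzySet

/-- If `0 < ε < min{d_S(χ_K, u), 1}`, then `d_H(K, u_α) > ε` for some `α ∈ [0, 1 - ε]`.
Here `d_S(χ_K, u)` is the Hausdorff distance between `send(χ_K) = K × [0,1]` and
`send(u)` in `X × ℝ`. -/
theorem exists_level_hausdorffDist_gt_of_lt_sendographDist {X : Type*} [MetricSpace X]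
    (K : Set X) (hK : IsCompact K) (hKne : K.Nonempty) (u : NormalFuzzySet X) (ε : ℝ)
    (hε : 0 < ε) (hεS : ε < hausdorffDist (K ×ˢ Icc (0 : ℝ) 1) u.sendograph) (hε1 : ε < 1) :
    ∃ α ∈ Icc (0 : ℝ) (1 - ε), ε < hausdorffDist K (u.level α) := by
  by_contra! h
  exact hεS.not_ge (u.hausdorffDist_sendograph_le hK hKne hε.le hε1.le h)
end

section
/- Let (X,d) be a metric space, let K ⊆ X be nonempty compact, let u be a normal fuzzy set on X, and let ε > 0. If ε < min{d_E(χ_K, u), 1/2}, then there exists a level α ∈ (ε, 1−ε] such that the Hausdorff distance satisfies d_H(K, u_α) > ε. -/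
open Metric Set

/-- If `0 < ε < min{d_E(χ_K, u), 1/2}`, then `d_H(K, u_α) > ε` for some `α ∈ (ε, 1 - ε]`.
Here `d_E(χ_K, u)` is the Hausdorff distance between
`end(χ_K) = (K × [0,1]) ∪ (X × {0})` and `end(u)` in `X × ℝ`. -/
theorem exists_level_hausdorffDist_gt_of_lt_endographDist {X : Type*} [MetricSpace X]
    (K : Set X) (hK : IsCompact K) (hKne : K.Nonempty) (u : NormalFuzzySet X) (ε : ℝ)
    (hε : 0 < ε)
    (hεE : ε < hausdorffDist ((K ×ˢ Icc (0 : ℝ) 1) ∪ ((univ : Set X) ×ˢ {(0 : ℝ)}))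
      u.endograph)
    (hε2 : ε < 1 / 2) :
    ∃ α ∈ Ioc ε (1 - ε), ε < hausdorffDist K (u.level α) := by
  by_contra hcon
  push_neg at hcon
  have hu0 : IsCompact (closure {x | 0 < u.toFun x}) := u.isCompact_closure_support'
  have h2ε : ε < 1 - ε := by linarith
  -- properties of levels
  have hleveq : ∀ α : ℝ, 0 < α → u.level α = {x | α ≤ u.toFun x} := by
    intro α hα
    exact if_neg (not_le.2 hα)
  have hlevc : ∀ α ∈ Ioc ε (1 - ε), IsCompact (u.level α) := by
    intro α hα
    rw [hleveq α (hε.trans hα.1)]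
    refine hu0.of_isClosed_subset
      (upperSemicontinuous_iff_isClosed_preimage.1 u.upperSemicontinuous' α) ?_
    exact fun x hx => subset_closure (lt_of_lt_of_le (hε.trans hα.1) hx)
  have hlevne : ∀ α ∈ Ioc ε (1 - ε), (u.level α).Nonempty := by
    intro α hα
    obtain ⟨x, hx⟩ := u.core_nonempty'
    refine ⟨x, ?_⟩
    rw [hleveq α (hε.trans hα.1)]
    exact le_trans (show α ≤ 1 by linarith [hα.2]) hx
  have hfin : ∀ α ∈ Ioc ε (1 - ε), EMetric.hausdorffEdist K (u.level α) ≠ ⊤ := by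
    intro α hα
    exact hausdorffEdist_ne_top_of_nonempty_of_bounded hKne (hlevne α hα)
      hK.isBounded (hlevc α hα).isBounded
  -- main bound
  have hmain : hausdorffDist ((K ×ˢ Icc (0 : ℝ) 1) ∪ ((univ : Set X) ×ˢ {(0 : ℝ)}))
      u.endograph ≤ ε := by
    apply hausdorffDist_le_of_mem_dist hε.le
    · rintro ⟨x, t⟩ hp
      rcases hp with ⟨hxK, ht0, ht1⟩ | ⟨-, ht⟩
      · by_cases hle : t ≤ ε
        · refine ⟨(x, 0), ⟨le_refl 0, (u.mem_Icc' x).1⟩, ?_⟩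
          rw [Prod.dist_eq]
          simp only [dist_self, Real.dist_eq, sub_zero]
          rw [abs_of_nonneg ht0]
          exact max_le hε.le hle
        · push_neg at hle
          set α := min t (1 - ε) with hαdef
          have hαmem : α ∈ Ioc ε (1 - ε) := ⟨lt_min hle h2ε, min_le_right _ _⟩
          have hαpos : 0 < α := hε.trans hαmem.1
          have h1 : infDist x (u.level α) ≤ ε :=
            le_trans (infDist_le_hausdorffDist_of_mem hxK (hfin α hαmem)) (hcon α hαmem)
          obtain ⟨y, hy, hyd⟩ := (hlevc α hαmem).exists_infDist_eq_dist (hlevne α hαmem) x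
          have hyu : α ≤ u.toFun y := by
            rw [hleveq α hαpos] at hy; exact hy
          refine ⟨(y, α), ⟨hαpos.le, hyu⟩, ?_⟩
          rw [Prod.dist_eq]
          have hdxy : dist x y ≤ ε := by rw [← hyd]; exact h1
          have hαt : α ≤ t := min_le_left _ _
          have htα : t - ε ≤ α := le_min (by linarith) (by linarith)
          have : dist t α ≤ ε := by
            rw [Real.dist_eq, abs_le]; constructor <;> linarith
          exact max_le hdxy this
      · simp only [mem_singleton_iff] at ht
        subst ht
        refine ⟨(x, 0), ⟨le_refl 0, (u.mem_Icc' x).1⟩, ?_⟩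
        simp [Prod.dist_eq, hε.le]
    · rintro ⟨y, t⟩ ⟨ht0, htu⟩
      have htle1 : t ≤ 1 := le_trans htu (u.mem_Icc' y).2
      by_cases hle : t ≤ ε
      · refine ⟨(y, 0), Or.inr ⟨mem_univ y, rfl⟩, ?_⟩
        rw [Prod.dist_eq]
        simp only [dist_self, Real.dist_eq, sub_zero]
        rw [abs_of_nonneg ht0]
        exact max_le hε.le hle
      · push_neg at hle
        set α := min t (1 - ε) with hαdef
        have hαmem : α ∈ Ioc ε (1 - ε) := ⟨lt_min hle h2ε, min_le_right _ _⟩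
        have hαpos : 0 < α := hε.trans hαmem.1
        have hyα : y ∈ u.level α := by
          rw [hleveq α hαpos]; exact le_trans (min_le_left _ _) htu
        have h1 : infDist y K ≤ ε := by
          have := infDist_le_hausdorffDist_of_mem hyα
            (by rw [EMetric.hausdorffEdist_comm]; exact hfin α hαmem)
          rw [hausdorffDist_comm] at this
          exact le_trans this (hcon α hαmem)
        obtain ⟨x, hx, hxd⟩ := hK.exists_infDist_eq_dist hKne y
        refine ⟨(x, α), Or.inl ⟨hx, ⟨hαpos.le, le_trans hαmem.2 (by linarith)⟩⟩, ?_⟩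
        rw [Prod.dist_eq]
        have hdxy : dist y x ≤ ε := by
          rw [← hxd]; exact h1
        have hαt : α ≤ t := min_le_left _ _
        have htα : t - ε ≤ α := le_min (by linarith) (by linarith)
        have : dist t α ≤ ε := by
          rw [Real.dist_eq, abs_le]; constructor <;> linarith
        exact max_le hdxy this
  linarith
end

section
/- Let f : X → X be a continuous map on a metric space (X,d), let ε > 0, and let K, L be nonempty compact subsets of X. If (K,L) is a LY ε-pair for the hyperextension f̄ and the Hausdorff metric d_H, then at least one of the pairs (K, K∪L) or (K∪L, L) is a LY ε/2-pair for f̄ and d_H. -/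
open Filter Metric TopologicalSpace

/-- The hyperextension of a continuous map `f`, acting on the space `𝒦(X)` of nonempty
compact subsets of `X` (endowed with the Hausdorff metric) by `K ↦ f(K)`. -/
noncomputable def hyperext {X : Type*} [MetricSpace X] (f : X → X) (hf : Continuous f) :
    NonemptyCompacts X → NonemptyCompacts X :=
  fun K => ⟨⟨f '' K, K.isCompact.image hf⟩, K.nonempty.image f⟩

/-- `(y,z)` is a Li–Yorke ε-pair for `g` and the metric of `Y`. -/
def IsLYPair {Y : Type*} [MetricSpace Y] (g : Y → Y) (ε : ℝ) (y z : Y) : Prop :=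
  ε ≤ limsup (fun n : ℕ => dist (g^[n] y) (g^[n] z)) atTop ∧
    liminf (fun n : ℕ => dist (g^[n] y) (g^[n] z)) atTop = 0

/-- `S` is a Li–Yorke ε-scrambled set for `g`. -/
def LYScrambled {Y : Type*} [MetricSpace Y] (g : Y → Y) (ε : ℝ) (S : Set Y) : Prop :=
  ∀ y ∈ S, ∀ z ∈ S, y ≠ z → IsLYPair g ε y z

/-!
The Hausdorff distance from `A` (or `B`) to `A ∪ B` is at most `d_H(A, B)`, while
`d_H(A, B) ≤ d_H(A, A ∪ B) + d_H(A ∪ B, B)`. Along the orbit, with `fⁿ(K ∪ L) = fⁿ(K) ∪ fⁿ(L)`,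
the two shorter distances therefore inherit `liminf = 0` from `d_H(fⁿ K, fⁿ L)`, and their
limsups add up to at least `ε`, so one of them is at least `ε / 2`.
-/

section LiminfLimsup

variable {α : Type*} {l : Filter α} {u v w : α → ℝ}

-- An unbounded real sequence has the junk value `limsup = 0`.
lemma isBoundedUnder_le_of_limsup_pos (h : 0 < limsup u l) : IsBoundedUnder (· ≤ ·) l u := by
  by_contra hu
  rw [Real.limsup_of_not_isBoundedUnder hu] at h
  exact h.false

lemma liminf_eq_zero_of_nonneg_of_le [l.NeBot] (hu : 0 ≤ u) (huv : u ≤ v)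
    (hv : IsBoundedUnder (· ≤ ·) l v) (hv0 : liminf v l = 0) : liminf u l = 0 := by
  have hu_bdd : IsBoundedUnder (· ≤ ·) l u := hv.mono_le (.of_forall huv)
  refine le_antisymm ?_ (le_liminf_of_le hu_bdd.isCoboundedUnder_ge (.of_forall hu))
  calc liminf u l ≤ liminf v l :=
        liminf_le_liminf (.of_forall huv) ⟨0, eventually_map.2 (.of_forall hu)⟩
          hv.isCoboundedUnder_ge
    _ = 0 := hv0

lemma half_le_limsup_and_liminf_eq_zero_or [l.NeBot] {ε : ℝ} (hε : 0 < ε) (huw : u ≤ w)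
    (hvw : v ≤ w) (hw : w ≤ u + v) (hw_sup : ε ≤ limsup w l) (hw_inf : liminf w l = 0) :
    (ε / 2 ≤ limsup u l ∧ liminf u l = 0) ∨ (ε / 2 ≤ limsup v l ∧ liminf v l = 0) := by
  have hw_bdd := isBoundedUnder_le_of_limsup_pos (hε.trans_le hw_sup)
  -- `v ≤ w ≤ u + v`, and symmetrically
  have hu0 : 0 ≤ u := fun x => (le_add_iff_nonneg_left _).mp ((hvw x).trans (hw x))
  have hv0 : 0 ≤ v := fun x => (le_add_iff_nonneg_right _).mp ((huw x).trans (hw x))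
  have hu_bdd : IsBoundedUnder (· ≤ ·) l u := hw_bdd.mono_le (.of_forall huw)
  have hv_bdd : IsBoundedUnder (· ≤ ·) l v := hw_bdd.mono_le (.of_forall hvw)
  have hsum : ε ≤ limsup u l + limsup v l :=
    calc ε ≤ limsup w l := hw_sup
      _ ≤ limsup (u + v) l :=
          limsup_le_limsup (.of_forall hw)
            (isBoundedUnder_of_eventually_ge
              (.of_forall fun x => (hu0 x).trans (huw x))).isCoboundedUnder_le
            (isBoundedUnder_le_add hu_bdd hv_bdd)
      _ ≤ limsup u l + limsup v l :=
          limsup_add_le (isBoundedUnder_of_eventually_ge (.of_forall hu0)) hu_bdd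
            (isBoundedUnder_of_eventually_ge (.of_forall hv0)).isCoboundedUnder_le hv_bdd
  rcases le_or_gt (ε / 2) (limsup u l) with hu_sup | hu_sup
  · exact .inl ⟨hu_sup, liminf_eq_zero_of_nonneg_of_le hu0 huw hw_bdd hw_inf⟩
  · exact .inr ⟨by linarith, liminf_eq_zero_of_nonneg_of_le hv0 hvw hw_bdd hw_inf⟩

end LiminfLimsup

namespace TopologicalSpace.NonemptyCompacts

variable {X : Type*} [MetricSpace X] {A B C : NonemptyCompacts X}

lemma dist_left_le_of_coe_eq_union (hC : (C : Set X) = (A : Set X) ∪ (B : Set X)) :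
    dist A C ≤ dist A B := by
  rw [dist_edist, dist_edist]
  refine ENNReal.toReal_mono (edist_ne_top A B) ?_
  change hausdorffEDist (A : Set X) C ≤ hausdorffEDist (A : Set X) B
  simpa [hC] using
    hausdorffEDist_union_le (s₁ := (A : Set X)) (s₂ := A) (t₁ := A) (t₂ := B)

lemma dist_right_le_of_coe_eq_union (hC : (C : Set X) = (A : Set X) ∪ (B : Set X)) :
    dist C B ≤ dist A B := by
  rw [dist_comm C, dist_comm A]
  exact dist_left_le_of_coe_eq_union (hC.trans (Set.union_comm _ _))

end TopologicalSpace.NonemptyCompacts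

lemma coe_hyperext_iterate {X : Type*} [MetricSpace X] (f : X → X) (hf : Continuous f)
    (K : NonemptyCompacts X) (n : ℕ) :
    ((hyperext f hf)^[n] K : Set X) = f^[n] '' K := by
  induction n with
  | zero => simp
  | succ n ih =>
    rw [Function.iterate_succ_apply', Function.iterate_succ', Set.image_comp, ← ih]
    rfl

/-- If `(K,L)` is a LY ε-pair for the hyperextension `f̄` and the Hausdorff metric, then at
least one of `(K, K ∪ L)` or `(K ∪ L, L)` is a LY ε/2-pair for `f̄` and `d_H`. -/
theorem lyPair_union_of_lyPair {X : Type*} [MetricSpace X]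
    (f : X → X) (hf : Continuous f) (ε : ℝ) (hε : 0 < ε)
    (K L KL : NonemptyCompacts X) (hKL : (KL : Set X) = (K : Set X) ∪ (L : Set X))
    (h : IsLYPair (hyperext f hf) ε K L) :
    IsLYPair (hyperext f hf) (ε / 2) K KL ∨ IsLYPair (hyperext f hf) (ε / 2) KL L := by
  have hKLn (n : ℕ) : ((hyperext f hf)^[n] KL : Set X) =
      ((hyperext f hf)^[n] K : Set X) ∪ ((hyperext f hf)^[n] L : Set X) := by
    simp only [coe_hyperext_iterate, hKL, Set.image_union]
  exact half_le_limsup_and_liminf_eq_zero_or hε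
    (fun n => NonemptyCompacts.dist_left_le_of_coe_eq_union (hKLn n))
    (fun n => NonemptyCompacts.dist_right_le_of_coe_eq_union (hKLn n))
    (fun n => dist_triangle _ _ _) h.1 h.2
end

section
/- Let f : X → X be a continuous map on a metric space (X,d). Then (X,f) is collectively sensitive for the metric d if and only if the hyperextension system (𝒦(X), f̄) is sensitive for the Hausdorff metric d_H. -/
/-!
Finite sets are points of `𝒦(X)`, and the Hausdorff distance of two of them exceeds `ε` exactly
when some point of one is `ε`-far from every point of the other: these one-sided cases are the two
alternatives of collective sensitivity. So sensitivity of `f̄` at the finite set `{x₁, …, x_N}`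
produces the perturbation `y` (move every `x_j` into the nearby compact set, or move a single
`x_{j₀}` onto a far point of it). Conversely, a compact `K` is Hausdorff-close to a finite net
`{x_j} ⊆ K`; collective sensitivity perturbs the net to `{y_j}` with `fⁿ{x_j}` and `fⁿ{y_j}`
`ε`-apart, and by the triangle inequality one of them is `ε/3`-far from `fⁿ(K)`.
-/

open Filter Metric TopologicalSpace

/-- `(Y,g)` is sensitive (to initial conditions). -/
def Sensitive {Y : Type*} [MetricSpace Y] (g : Y → Y) : Prop :=
  ∃ ε > 0, ∀ y : Y, ∀ δ > 0, ∃ z : Y, ∃ n : ℕ, 1 ≤ n ∧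
    dist y z < δ ∧ ε < dist (g^[n] y) (g^[n] z)

/-- `(X,f)` is collectively sensitive. -/
def CollectivelySensitive {X : Type*} [MetricSpace X] (f : X → X) : Prop :=
  ∃ ε > 0, ∀ N : ℕ, 1 ≤ N → ∀ x : Fin N → X, Function.Injective x → ∀ δ > 0,
    ∃ y : Fin N → X, ∃ n : ℕ, 1 ≤ n ∧ (∀ j, dist (x j) (y j) < δ) ∧
      ∃ j₀ : Fin N, (∀ j, ε < dist (f^[n] (x j₀)) (f^[n] (y j))) ∨
        (∀ j, ε < dist (f^[n] (x j)) (f^[n] (y j₀)))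

theorem Sensitive.of_forall_exists_pair {Y : Type*} [MetricSpace Y] {g : Y → Y} {ε : ℝ}
    (hε : 0 < ε)
    (h : ∀ y : Y, ∀ δ > 0, ∃ z₁ z₂ : Y, ∃ n : ℕ, 1 ≤ n ∧ dist y z₁ < δ ∧ dist y z₂ < δ ∧
      ε ≤ dist (g^[n] z₁) (g^[n] z₂)) :
    Sensitive g := by
  refine ⟨ε / 3, by positivity, fun y δ hδ => ?_⟩
  obtain ⟨z₁, z₂, n, hn, hz₁, hz₂, hfar⟩ := h y δ hδ
  have := dist_triangle_left (g^[n] z₁) (g^[n] z₂) (g^[n] y)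
  rcases lt_or_ge (ε / 3) (dist (g^[n] y) (g^[n] z₁)) with h₁ | h₁
  · exact ⟨z₁, n, hn, hz₁, h₁⟩
  · exact ⟨z₂, n, hn, hz₂, by linarith⟩

namespace TopologicalSpace.NonemptyCompacts

variable {ι : Type*} [Finite ι] [Nonempty ι]

section Topological

variable {X : Type*} [TopologicalSpace X]

theorem map_iterate {f : X → X} (hf : Continuous f) (n : ℕ) :
    (NonemptyCompacts.map f hf)^[n] = NonemptyCompacts.map f^[n] (hf.iterate n) := by
  induction n with
  | zero => ext; simp
  | succ n ih =>
    ext K : 1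
    rw [Function.iterate_succ_apply', ih]
    apply NonemptyCompacts.ext
    simp only [coe_map, Set.image_image, Function.iterate_succ_apply']

def ofRange (x : ι → X) : NonemptyCompacts X :=
  ⟨⟨Set.range x, (Set.finite_range x).isCompact⟩, Set.range_nonempty x⟩

theorem map_ofRange {Y : Type*} [TopologicalSpace Y] {g : X → Y} (hg : Continuous g)
    (x : ι → X) : (ofRange x).map g hg = ofRange (g ∘ x) := by
  ext
  simp [ofRange, Set.range_comp]

end Topological

variable {X : Type*} [MetricSpace X] {K L : NonemptyCompacts X} {a : X} {ε : ℝ}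

theorem exists_dist_lt_of_dist_lt (ha : a ∈ K) (h : dist K L < ε) : ∃ b ∈ L, dist a b < ε :=
  exists_dist_lt_of_hausdorffDist_lt ha h (edist_ne_top K L)

theorem le_dist_of_mem_of_forall_le_dist (ha : a ∈ K) (h : ∀ b ∈ L, ε ≤ dist a b) :
    ε ≤ dist K L :=
  ((le_infDist L.nonempty).2 h).trans (infDist_le_hausdorffDist_of_mem ha (edist_ne_top K L))

theorem exists_forall_lt_dist_of_lt_dist (hε : 0 ≤ ε) (h : ε < dist K L) :
    (∃ a ∈ K, ∀ b ∈ L, ε < dist a b) ∨ (∃ b ∈ L, ∀ a ∈ K, ε < dist b a) := by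
  by_contra! hnear
  exact h.not_ge (hausdorffDist_le_of_mem_dist hε hnear.1 hnear.2)

theorem dist_ofRange_le {x y : ι → X} {r : ℝ}
    (h : ∀ i, dist (x i) (y i) ≤ r) : dist (ofRange x) (ofRange y) ≤ r := by
  refine hausdorffDist_le_of_mem_dist (dist_nonneg.trans (h (Classical.arbitrary ι))) ?_ ?_
  · rintro _ ⟨i, rfl⟩
    exact ⟨y i, ⟨i, rfl⟩, h i⟩
  · rintro _ ⟨i, rfl⟩
    exact ⟨x i, ⟨i, rfl⟩, dist_comm (y i) (x i) ▸ h i⟩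

theorem exists_injective_fin_dist_ofRange_le (K : NonemptyCompacts X) {r : ℝ} (hr : 0 < r) :
    ∃ (N : ℕ) (_ : Nonempty (Fin N)) (x : Fin N → X),
      Function.Injective x ∧ dist K (ofRange x) ≤ r := by
  obtain ⟨t, htK, htfin, hcover⟩ := K.isCompact.finite_cover_balls hr
  obtain ⟨N, x, hx, rfl⟩ := htfin.fin_param
  obtain ⟨a₀, ha₀⟩ := K.nonempty
  obtain ⟨_, ⟨i₀, rfl⟩, -⟩ := Set.mem_iUnion₂.1 (hcover ha₀)
  refine ⟨N, ⟨i₀⟩, x, hx, hausdorffDist_le_of_mem_dist hr.le ?_ ?_⟩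
  · intro a ha
    obtain ⟨_, ⟨i, rfl⟩, hai⟩ := Set.mem_iUnion₂.1 (hcover ha)
    exact ⟨x i, ⟨i, rfl⟩, (mem_ball.1 hai).le⟩
  · rintro _ ⟨i, rfl⟩
    exact ⟨x i, htK ⟨i, rfl⟩, by simpa using hr.le⟩

end TopologicalSpace.NonemptyCompacts

open NonemptyCompacts

theorem hyperext_iterate {X : Type*} [MetricSpace X] {f : X → X} (hf : Continuous f) (n : ℕ) :
    (hyperext f hf)^[n] = NonemptyCompacts.map f^[n] (hf.iterate n) :=
  map_iterate hf n

theorem CollectivelySensitive.sensitive_hyperext {X : Type*} [MetricSpace X] {f : X → X}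
    (hf : Continuous f) (h : CollectivelySensitive f) : Sensitive (hyperext f hf) := by
  obtain ⟨ε, hε, H⟩ := h
  refine Sensitive.of_forall_exists_pair hε fun K δ hδ => ?_
  obtain ⟨N, _, x, hx, hKx⟩ := K.exists_injective_fin_dist_ofRange_le (r := δ / 3) (by positivity)
  obtain ⟨y, n, hn, hxy, j₀, hfar⟩ :=
    H N (Fin.pos_iff_nonempty.2 ‹_›) x hx (δ / 3) (by positivity)
  have hxy' : dist (ofRange x) (ofRange y) ≤ δ / 3 := dist_ofRange_le fun j => (hxy j).le
  refine ⟨ofRange x, ofRange y, n, hn, by linarith,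
    by linarith [dist_triangle K (ofRange x) (ofRange y)], ?_⟩
  simp only [hyperext_iterate, map_ofRange]
  rcases hfar with hfar | hfar
  · refine le_dist_of_mem_of_forall_le_dist ⟨j₀, rfl⟩ ?_
    rintro _ ⟨j, rfl⟩
    exact (hfar j).le
  · rw [dist_comm]
    refine le_dist_of_mem_of_forall_le_dist ⟨j₀, rfl⟩ ?_
    rintro _ ⟨j, rfl⟩
    exact (dist_comm (f^[n] (x j)) _ ▸ hfar j).le

theorem CollectivelySensitive.of_sensitive_hyperext {X : Type*} [MetricSpace X] {f : X → X}
    (hf : Continuous f) (h : Sensitive (hyperext f hf)) : CollectivelySensitive f := by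
  obtain ⟨ε, hε, H⟩ := h
  refine ⟨ε, hε, fun N hN x _ δ hδ => ?_⟩
  have : Nonempty (Fin N) := Fin.pos_iff_nonempty.1 hN
  obtain ⟨L, n, hn, hxL, hfar⟩ := H (ofRange x) δ hδ
  rw [hyperext_iterate, map_ofRange] at hfar
  rcases exists_forall_lt_dist_of_lt_dist hε.le hfar with
    ⟨_, ⟨j₀, rfl⟩, hj₀⟩ | ⟨_, ⟨q, hqL, rfl⟩, hq⟩
  · choose y hyL hy using fun j => exists_dist_lt_of_dist_lt (K := ofRange x) ⟨j, rfl⟩ hxL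
    exact ⟨y, n, hn, hy, j₀, .inl fun j => hj₀ _ (Set.mem_image_of_mem _ (hyL j))⟩
  · obtain ⟨_, ⟨j₀, rfl⟩, hqj₀⟩ := exists_dist_lt_of_dist_lt hqL (dist_comm (ofRange x) L ▸ hxL)
    refine ⟨Function.update x j₀ q, n, hn, fun j => ?_, j₀, .inr fun j => ?_⟩
    · rcases eq_or_ne j j₀ with rfl | hj
      · simpa [dist_comm] using hqj₀
      · simpa [hj] using hδ
    · rw [Function.update_self, dist_comm]
      exact hq _ ⟨j, rfl⟩

/-- `(X,f)` is collectively sensitive for `d` if and only if the hyperextension system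
`(𝒦(X), f̄)` is sensitive for the Hausdorff metric `d_H`. -/
theorem collectivelySensitive_iff_sensitive_hyperext {X : Type*} [MetricSpace X]
    (f : X → X) (hf : Continuous f) :
    CollectivelySensitive f ↔ Sensitive (hyperext f hf) :=
  ⟨CollectivelySensitive.sensitive_hyperext hf, CollectivelySensitive.of_sensitive_hyperext hf⟩
end

section
/- Let f : X → X be a continuous map on a metric space (X,d). Then (X,f) is strongly sensitive for the metric d if and only if the hyperextension system (𝒦(X), f̄) is strongly sensitive for the Hausdorff metric d_H. -/
open Filter Metric TopologicalSpace

/-- `(Y,g)` is strongly sensitive. -/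
def StronglySensitive {Y : Type*} [MetricSpace Y] (g : Y → Y) : Prop :=
  ∃ ε > 0, ∀ y : Y, ∀ δ > 0, ∃ n₀ : ℕ, ∀ n : ℕ, n₀ ≤ n →
    ∃ z : Y, dist y z < δ ∧ ε < dist (g^[n] y) (g^[n] z)

lemma hyperext_iterate_coe {X : Type*} [MetricSpace X] (f : X → X) (hf : Continuous f)
    (n : ℕ) (K : NonemptyCompacts X) :
    (((hyperext f hf)^[n] K : NonemptyCompacts X) : Set X) = f^[n] '' (K : Set X) := by
  induction n with
  | zero => simp
  | succ n ih =>
    rw [Function.iterate_succ_apply', Function.iterate_succ']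
    show f '' (((hyperext f hf)^[n] K : NonemptyCompacts X) : Set X) = _
    rw [ih, Set.image_comp]

/-- `(X,f)` is strongly sensitive for `d` if and only if the hyperextension system
`(𝒦(X), f̄)` is strongly sensitive for the Hausdorff metric `d_H`. -/
theorem stronglySensitive_iff_stronglySensitive_hyperext {X : Type*} [MetricSpace X]
    (f : X → X) (hf : Continuous f) :
    StronglySensitive f ↔ StronglySensitive (hyperext f hf) := by
  constructor
  · rintro ⟨ε, hε, H⟩
    refine ⟨ε / 2, by linarith, ?_⟩
    intro K δ hδ
    have h4 : (0:ℝ) < δ / 4 := by linarith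
    obtain ⟨t, hts, htf, htc⟩ :=
      finite_approx_of_totallyBounded K.isCompact.totallyBounded (δ/4) h4
    -- t is a nonempty finite δ/4-net of K
    obtain ⟨x₀, hx₀⟩ := K.nonempty
    obtain ⟨y₀, hy₀, _⟩ := Set.mem_iUnion₂.mp (htc hx₀)
    classical
    set N : X → ℕ := fun y => (H y (δ/4) h4).choose with hN_def
    have hN : ∀ y : X, ∀ n : ℕ, N y ≤ n →
        ∃ z, dist y z < δ/4 ∧ ε < dist (f^[n] y) (f^[n] z) :=
      fun y => (H y (δ/4) h4).choose_spec
    refine ⟨htf.toFinset.sup N, ?_⟩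
    intro n hn
    have key : ∀ y ∈ t, ∃ z, dist y z < δ/4 ∧ ε < dist (f^[n] y) (f^[n] z) := by
      intro y hy
      exact hN y n (le_trans (Finset.le_sup (htf.mem_toFinset.mpr hy)) hn)
    choose! z hz1 hz2 using key
    set p := f^[n] y₀ with hp_def
    have hw : ∀ y ∈ t, ∃ w, dist y w < δ/4 ∧ ε/2 < dist p (f^[n] w) := by
      intro y hy
      by_cases h : ε/2 < dist p (f^[n] (z y))
      · exact ⟨z y, hz1 y hy, h⟩
      · refine ⟨y, by simpa using h4, ?_⟩
        push_neg at h
        have h1 := hz2 y hy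
        have h2 := dist_triangle (f^[n] y) p (f^[n] (z y))
        rw [dist_comm p (f^[n] y)]
        linarith
    choose! w hw1 hw2 using hw
    set F : Set X := w '' t with hF_def
    have hFfin : F.Finite := htf.image w
    have hFne : F.Nonempty := ⟨w y₀, Set.mem_image_of_mem w hy₀⟩
    refine ⟨⟨⟨F, hFfin.isCompact⟩, hFne⟩, ?_, ?_⟩
    · rw [NonemptyCompacts.dist_eq]
      refine lt_of_le_of_lt (hausdorffDist_le_of_mem_dist (by linarith) ?_ ?_) (by linarith : δ/2 < δ)
      · intro x hx
        obtain ⟨y, hy, hxy⟩ := Set.mem_iUnion₂.mp (htc hx)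
        refine ⟨w y, Set.mem_image_of_mem w hy, ?_⟩
        have h1 : dist x y < δ/4 := hxy
        have h2 := hw1 y hy
        have := dist_triangle x y (w y)
        linarith
      · rintro v ⟨y, hy, rfl⟩
        exact ⟨y, hts hy, by have := hw1 y hy; rw [dist_comm]; linarith⟩
    · rw [NonemptyCompacts.dist_eq, hyperext_iterate_coe, hyperext_iterate_coe]
      have hcont : Continuous (f^[n]) := hf.iterate n
      have hKc : IsCompact (f^[n] '' (K : Set X)) := K.isCompact.image hcont
      have hFc : IsCompact (f^[n] '' F) := (hFfin.isCompact).image hcont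
      have hFne' : (f^[n] '' F).Nonempty := hFne.image _
      have hKne' : (f^[n] '' (K : Set X)).Nonempty := K.nonempty.image _
      have hfin : EMetric.hausdorffEdist (f^[n] '' (K : Set X)) (f^[n] '' F) ≠ ⊤ :=
        hausdorffEdist_ne_top_of_nonempty_of_bounded hKne' hFne' hKc.isBounded hFc.isBounded
      have hpmem : p ∈ f^[n] '' (K : Set X) := Set.mem_image_of_mem _ (hts hy₀)
      have h1 : infDist p (f^[n] '' F) ≤ hausdorffDist (f^[n] '' (K : Set X)) (f^[n] '' F) :=
        infDist_le_hausdorffDist_of_mem hpmem hfin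
      obtain ⟨q, hq, hq'⟩ := hFc.exists_infDist_eq_dist hFne' p
      obtain ⟨v, ⟨y, hy, rfl⟩, rfl⟩ := hq
      have h2 : ε/2 < dist p (f^[n] (w y)) := hw2 y hy
      calc ε/2 < dist p (f^[n] (w y)) := h2
        _ = infDist p (f^[n] '' F) := hq'.symm
        _ ≤ _ := h1
  · rintro ⟨ε, hε, H⟩
    refine ⟨ε, hε, ?_⟩
    intro x δ hδ
    set K : NonemptyCompacts X := ⟨⟨{x}, isCompact_singleton⟩, ⟨x, rfl⟩⟩ with hK_def
    obtain ⟨n₀, hn₀⟩ := H K δ hδ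
    refine ⟨n₀, ?_⟩
    intro n hn
    obtain ⟨K', hd, hfar⟩ := hn₀ n hn
    rw [NonemptyCompacts.dist_eq, hyperext_iterate_coe, hyperext_iterate_coe] at hfar
    have hKco : ((K : NonemptyCompacts X) : Set X) = {x} := rfl
    rw [hKco, Set.image_singleton] at hfar
    have hK'ne : (f^[n] '' (K' : Set X)).Nonempty := K'.nonempty.image _
    have hex : ∃ q ∈ f^[n] '' (K' : Set X), ε < dist (f^[n] x) q := by
      by_contra h
      push_neg at h
      have : hausdorffDist ({f^[n] x} : Set X) (f^[n] '' (K' : Set X)) ≤ ε := by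
        refine hausdorffDist_le_of_mem_dist hε.le ?_ ?_
        · rintro a rfl
          obtain ⟨q, hq⟩ := hK'ne
          exact ⟨q, hq, h q hq⟩
        · intro q hq
          exact ⟨f^[n] x, rfl, by rw [dist_comm]; exact h q hq⟩
      linarith
    obtain ⟨q, ⟨a, ha, rfl⟩, hq⟩ := hex
    refine ⟨a, ?_, hq⟩
    rw [NonemptyCompacts.dist_eq, hKco] at hd
    have hfin : EMetric.hausdorffEdist (K' : Set X) ({x} : Set X) ≠ ⊤ :=
      hausdorffEdist_ne_top_of_nonempty_of_bounded K'.nonempty ⟨x, rfl⟩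
        K'.isCompact.isBounded isCompact_singleton.isBounded
    have h1 : infDist a ({x} : Set X) ≤ hausdorffDist (K' : Set X) ({x} : Set X) :=
      infDist_le_hausdorffDist_of_mem ha hfin
    rw [infDist_singleton] at h1
    rw [hausdorffDist_comm] at h1
    rw [dist_comm]
    linarith
end

section
/- Let X be a real topological vector space whose topology is induced by a complete translation-invariant metric d (a Fréchet space), and let T : X → X be a continuous linear operator. Then the following are equivalent: (i) (X,T) is not equicontinuous; (ii) (X,T) is sensitive for the metric d; (iii) (X,T) is collectively sensitive for the metric d. -/
/-!
Non-equicontinuity is witnessed by close pairs whose orbits separate. For an additive map and a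
translation-invariant metric, the orbit distance of a pair does not change when both points are
translated, so such a pair can be moved next to any point, which is sensitivity. For collective
sensitivity a single perturbation `w` of `0` with `Tⁿ w` far from `0` serves all points at once,
at the cost of halving the threshold.
-/

open Filter Metric

/-- The system `(Y,g)` is equicontinuous: for every `ε > 0` there is `δ > 0` such that
`d(y,z) < δ` implies `d(gⁿ(y), gⁿ(z)) < ε` for all `n ∈ ℕ`. -/
def EquicontinuousSystem {Y : Type*} [MetricSpace Y] (g : Y → Y) : Prop :=
  ∀ ε > 0, ∃ δ > 0, ∀ y z : Y, dist y z < δ →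
    ∀ n : ℕ, 1 ≤ n → dist (g^[n] y) (g^[n] z) < ε

section MetricSpace

variable {Y : Type*} [MetricSpace Y] {g : Y → Y}

theorem Sensitive.not_equicontinuousSystem [Nonempty Y] (hg : Sensitive g) :
    ¬ EquicontinuousSystem g := by
  intro hE
  obtain ⟨ε, hε, hsens⟩ := hg
  obtain ⟨δ, hδ, hclose⟩ := hE ε hε
  obtain ⟨z, n, hn, hz, hfar⟩ := hsens (Classical.arbitrary Y) δ hδ
  exact (hclose _ z hz n hn).not_gt hfar

theorem CollectivelySensitive.sensitive (hg : CollectivelySensitive g) : Sensitive g := by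
  obtain ⟨ε, hε, hcoll⟩ := hg
  refine ⟨ε, hε, fun y δ hδ => ?_⟩
  obtain ⟨z, n, hn, hz, j₀, hfar⟩ :=
    hcoll 1 le_rfl (fun _ => y) (Function.injective_of_subsingleton _) δ hδ
  refine ⟨z 0, n, hn, hz 0, ?_⟩
  rcases hfar with hfar | hfar
  · exact hfar 0
  · simpa [Subsingleton.elim j₀ 0] using hfar 0

end MetricSpace

section TranslationInvariant

variable {X F : Type*} [AddCommGroup X] [MetricSpace X] [IsIsometricVAdd X X] [FunLike F X X]

theorem dist_iterate_map_add_right [AddHomClass F X X] (f : F) (n : ℕ) (x y w : X) :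
    dist ((⇑f)^[n] (x + w)) ((⇑f)^[n] (y + w)) = dist ((⇑f)^[n] x) ((⇑f)^[n] y) := by
  rw [iterate_map_add, iterate_map_add, dist_add_right]

theorem sensitive_of_not_equicontinuousSystem [AddHomClass F X X] (f : F)
    (hf : ¬ EquicontinuousSystem f) : Sensitive f := by
  unfold EquicontinuousSystem at hf
  push Not at hf
  obtain ⟨ε, hε, hsep⟩ := hf
  refine ⟨ε / 2, half_pos hε, fun x δ hδ => ?_⟩
  obtain ⟨y, z, hyz, n, hn, hfar⟩ := hsep δ hδ
  obtain ⟨u, rfl⟩ : ∃ u, x = y + u := ⟨x - y, (add_sub_cancel y x).symm⟩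
  refine ⟨z + u, n, hn, by rwa [dist_add_right], ?_⟩
  rw [dist_iterate_map_add_right]
  linarith

theorem Sensitive.collectivelySensitive [AddMonoidHomClass F X X] {f : F} (hf : Sensitive f) :
    CollectivelySensitive f := by
  obtain ⟨ε, hε, hsens⟩ := hf
  refine ⟨ε / 2, half_pos hε, fun N hN x _ δ hδ => ?_⟩
  obtain ⟨w, n, hn, hw, hfar⟩ := hsens 0 δ hδ
  rw [iterate_map_zero] at hfar
  set j₀ : Fin N := ⟨0, hN⟩
  set Tn := (⇑f)^[n]
  have hmove : ∀ v u : X, dist v (v + u) = dist 0 u := fun v u => by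
    simpa using dist_add_left v 0 u
  -- Points whose orbit is already `ε/2`-far from that of `x j₀` stay put; the others are moved
  -- by `w`, which by the triangle inequality makes them `ε/2`-far.
  let y : Fin N → X := fun j => if ε / 2 < dist (Tn (x j₀)) (Tn (x j)) then x j else x j + w
  refine ⟨y, n, hn, fun j => ?_, j₀, Or.inl fun j => ?_⟩ <;>
    by_cases h : ε / 2 < dist (Tn (x j₀)) (Tn (x j)) <;> simp only [y, h, if_true, if_false]
  · simpa using hδ
  · rwa [hmove]
  · exact h
  · have := dist_triangle (Tn (x j)) (Tn (x j₀)) (Tn (x j) + Tn w)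
    rw [hmove, dist_comm (Tn (x j))] at this
    rw [iterate_map_add]
    linarith [not_lt.mp h]

theorem not_equicontinuousSystem_iff_sensitive [AddMonoidHomClass F X X] (f : F) :
    ¬ EquicontinuousSystem f ↔ Sensitive f :=
  ⟨sensitive_of_not_equicontinuousSystem f, Sensitive.not_equicontinuousSystem⟩

theorem sensitive_iff_collectivelySensitive [AddMonoidHomClass F X X] (f : F) :
    Sensitive f ↔ CollectivelySensitive f :=
  ⟨Sensitive.collectivelySensitive, CollectivelySensitive.sensitive⟩

end TranslationInvariant

theorem not_equicontinuous_iff_sensitive_iff_collectivelySensitive_general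
    {X : Type*} [AddCommGroup X] [Module ℝ X] [MetricSpace X]
    (hinv : ∀ x y z : X, dist (x + z) (y + z) = dist x y)
    (T : X →L[ℝ] X) :
    (¬ EquicontinuousSystem ⇑T ↔ Sensitive ⇑T) ∧
      (Sensitive ⇑T ↔ CollectivelySensitive ⇑T) := by
  have : IsIsometricVAdd X X :=
    ⟨fun c => Isometry.of_dist_eq fun x y => by
      simpa only [vadd_eq_add, add_comm c] using hinv x y c⟩
  exact ⟨not_equicontinuousSystem_iff_sensitive T, sensitive_iff_collectivelySensitive T⟩

/-- For a continuous linear operator `T` on a Fréchet space (a real topological vector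
space whose topology comes from a complete translation-invariant metric), the following
are equivalent: `(X,T)` is not equicontinuous; `(X,T)` is sensitive; `(X,T)` is
collectively sensitive. -/
theorem not_equicontinuous_iff_sensitive_iff_collectivelySensitive
    {X : Type*} [AddCommGroup X] [Module ℝ X] [MetricSpace X] [CompleteSpace X]
    [IsTopologicalAddGroup X] [ContinuousSMul ℝ X]
    (hinv : ∀ x y z : X, dist (x + z) (y + z) = dist x y)
    (T : X →L[ℝ] X) :
    (¬ EquicontinuousSystem ⇑T ↔ Sensitive ⇑T) ∧
      (Sensitive ⇑T ↔ CollectivelySensitive ⇑T) :=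
  not_equicontinuous_iff_sensitive_iff_collectivelySensitive_general hinv T
end

section
/- Let X be a real topological vector space whose topology is induced by a complete translation-invariant metric d (a Fréchet space), and let T : X → X be a continuous linear operator. Assume that the linear span of NS(T) is dense in X and that (X,T) is equicontinuous. Then for every nonempty compact set K ⊆ X, the Hausdorff distance d_H(Tⁿ(K), {0_X}) converges to 0 as n → ∞. -/
/-! Every vector of `NS(T)`, and then (by linearity and continuity of the vector space
operations) of its span, has its whole orbit converging to `0`: once an orbit comes
`δ`-close to the fixed point `0`, equicontinuity keeps it `ε`-close forever. By
equicontinuity the set of vectors with this property is closed, so by density it is all of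
`X`. On a compact set, pointwise convergence of an equicontinuous family is uniform
(Arzelà–Ascoli), and uniform convergence of `Tⁿ` to `0` on `K` is exactly the convergence of
`d_H(Tⁿ(K), {0})` to `0`. -/

open Filter Metric

/-- `NS(T)`: the set of vectors whose `T`-orbit admits a subsequence converging to `0`. -/
def nullSubOrbit {X : Type*} [AddCommGroup X] [Module ℝ X] [MetricSpace X] (T : X → X) :
    Set X :=
  {x : X | ∃ φ : ℕ → ℕ, StrictMono φ ∧ Tendsto (fun k => T^[φ k] x) atTop (nhds 0)}

open Topology

namespace EquicontinuousSystem

variable {Y : Type*} [MetricSpace Y] {g : Y → Y}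

theorem uniformEquicontinuous_iterate (hg : EquicontinuousSystem g) :
    UniformEquicontinuous fun n : ℕ => g^[n] := by
  rw [Metric.uniformEquicontinuous_iff]
  intro ε hε
  obtain ⟨δ, hδ, hδε⟩ := hg ε hε
  refine ⟨min δ ε, lt_min hδ hε, fun y z hyz n => ?_⟩
  rcases Nat.eq_zero_or_pos n with rfl | hn
  · exact hyz.trans_le (min_le_right δ ε)
  · exact hδε y z (hyz.trans_le (min_le_left δ ε)) n hn

theorem tendsto_iterate_of_mem_closure_orbit (hg : EquicontinuousSystem g) {p y : Y}
    (hp : g p = p) (hy : p ∈ closure (Set.range fun n : ℕ => g^[n] y)) :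
    Tendsto (fun n : ℕ => g^[n] y) atTop (𝓝 p) := by
  rw [Metric.tendsto_atTop]
  intro ε hε
  obtain ⟨δ, hδ, hδε⟩ := hg ε hε
  obtain ⟨k, hk⟩ := Metric.mem_closure_range_iff.1 hy δ hδ
  refine ⟨k + 1, fun n hn => ?_⟩
  obtain ⟨m, rfl⟩ : ∃ m, n = m + k := ⟨n - k, by omega⟩
  have hclose := hδε (g^[k] y) p (by rwa [dist_comm]) m (by omega)
  rwa [← Function.iterate_add_apply, Function.iterate_fixed hp] at hclose

end EquicontinuousSystem

def LinearMap.stableSubmodule {R M : Type*} [Semiring R] [AddCommMonoid M] [Module R M]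
    [TopologicalSpace M] [ContinuousAdd M] [ContinuousConstSMul R M] (f : M →ₗ[R] M) :
    Submodule R M where
  carrier := {x | Tendsto (fun n : ℕ => f^[n] x) atTop (𝓝 0)}
  zero_mem' := by
    simpa only [Set.mem_ofPred_eq, ← Module.End.coe_pow, map_zero] using tendsto_const_nhds
  add_mem' {x y} hx hy := by
    simpa only [Set.mem_ofPred_eq, ← Module.End.coe_pow, map_add, add_zero] using hx.add hy
  smul_mem' c x hx := by
    simpa only [Set.mem_ofPred_eq, ← Module.End.coe_pow, map_smul, smul_zero] using
      hx.const_smul c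

theorem Equicontinuous.tendstoUniformlyOn_of_tendsto {ι X α : Type*} [TopologicalSpace X]
    [UniformSpace α] {F : ι → X → α} {f : X → α} {l : Filter ι} (hF : Equicontinuous F)
    (hFf : ∀ x, Tendsto (F · x) l (𝓝 (f x))) {K : Set X} (hK : IsCompact K) :
    TendstoUniformlyOn F f l K := by
  have hcompact : ∀ s ∈ {s : Set X | IsCompact s}, IsCompact s := fun _ hs => hs
  have hcovers : ⋃₀ {s : Set X | IsCompact s} = Set.univ :=
    Set.eq_univ_of_forall fun x => ⟨{x}, isCompact_singleton, rfl⟩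
  have hunif := (EquicontinuousOn.tendsto_uniformOnFun_iff_pi hcompact hcovers
    (fun s _ => hF.equicontinuousOn s) l f).2 (tendsto_pi_nhds.2 hFf)
  exact UniformOnFun.tendsto_iff_tendstoUniformlyOn.1 hunif K hK

theorem TendstoUniformlyOn.tendsto_hausdorffDist_image {ι X Y : Type*} [MetricSpace Y]
    {F : ι → X → Y} {f : X → Y} {l : Filter ι} {K : Set X} (h : TendstoUniformlyOn F f l K) :
    Tendsto (fun i => hausdorffDist (F i '' K) (f '' K)) l (𝓝 0) := by
  rw [Metric.tendsto_nhds]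
  intro ε hε
  filter_upwards [Metric.tendstoUniformlyOn_iff.1 h (ε / 2) (half_pos hε)] with i hi
  have hle : hausdorffDist (F i '' K) (f '' K) ≤ ε / 2 := by
    refine hausdorffDist_le_of_mem_dist (half_pos hε).le ?_ ?_
    · rintro _ ⟨x, hx, rfl⟩
      exact ⟨f x, Set.mem_image_of_mem f hx, by rw [dist_comm]; exact (hi x hx).le⟩
    · rintro _ ⟨x, hx, rfl⟩
      exact ⟨F i x, Set.mem_image_of_mem (F i) hx, (hi x hx).le⟩
  rw [Real.dist_0_eq_abs, abs_of_nonneg hausdorffDist_nonneg]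
  linarith

theorem hausdorffDist_image_tendsto_zero_of_equicontinuous_general
    {X : Type*} [AddCommGroup X] [Module ℝ X] [MetricSpace X]
    [IsTopologicalAddGroup X] [ContinuousSMul ℝ X]
    (T : X →L[ℝ] X)
    (hdense : Dense ((Submodule.span ℝ (nullSubOrbit ⇑T) : Submodule ℝ X) : Set X))
    (hequi : EquicontinuousSystem ⇑T) :
    ∀ K : Set X, IsCompact K → K.Nonempty →
      Tendsto (fun n : ℕ => hausdorffDist ((⇑T)^[n] '' K) {(0 : X)}) atTop (nhds 0) := by
  intro K hK hK₀
  have hiterate : Equicontinuous fun n : ℕ => (⇑T)^[n] :=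
    hequi.uniformEquicontinuous_iterate.equicontinuous
  have hnull : nullSubOrbit ⇑T ⊆ (T : X →ₗ[ℝ] X).stableSubmodule := by
    rintro x ⟨φ, -, hφ⟩
    exact hequi.tendsto_iterate_of_mem_closure_orbit (map_zero T)
      (mem_closure_of_tendsto hφ (Eventually.of_forall fun k => Set.mem_range_self (φ k)))
  have hclosed : IsClosed ((T : X →ₗ[ℝ] X).stableSubmodule : Set X) :=
    hiterate.isClosed_setOfPred_tendsto (f := fun _ => 0) continuous_const
  have hstable : ∀ x, Tendsto (fun n : ℕ => (⇑T)^[n] x) atTop (𝓝 0) := fun x =>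
    hclosed.closure_subset_iff.2 (Submodule.span_le.2 hnull) (hdense x)
  have hunif := hiterate.tendstoUniformlyOn_of_tendsto (f := fun _ => 0) hstable hK
  simpa only [hK₀.image_const] using hunif.tendsto_hausdorffDist_image

/-- Let `T` be a continuous linear operator on a Fréchet space (a real topological vector
space whose topology comes from a complete translation-invariant metric). If the linear
span of `NS(T)` is dense and `(X,T)` is equicontinuous, then for every nonempty compact
set `K` the Hausdorff distance `d_H(Tⁿ(K), {0})` converges to `0`. -/
theorem hausdorffDist_image_tendsto_zero_of_equicontinuous
    {X : Type*} [AddCommGroup X] [Module ℝ X] [MetricSpace X] [CompleteSpace X]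
    [IsTopologicalAddGroup X] [ContinuousSMul ℝ X]
    (hinv : ∀ x y z : X, dist (x + z) (y + z) = dist x y)
    (T : X →L[ℝ] X)
    (hdense : Dense ((Submodule.span ℝ (nullSubOrbit ⇑T) : Submodule ℝ X) : Set X))
    (hequi : EquicontinuousSystem ⇑T) :
    ∀ K : Set X, IsCompact K → K.Nonempty →
      Tendsto (fun n : ℕ => hausdorffDist ((⇑T)^[n] '' K) {(0 : X)}) atTop (nhds 0) :=
  hausdorffDist_image_tendsto_zero_of_equicontinuous_general T hdense hequi
end
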